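/- arXiv:1803.02461 — 2 statements merged into one kernel-verified Lean document; each statement's English description precedes it below -/
import Mathlib

section
/- (One step of the Polyak subgradient method.) Suppose g is μ-sharp on 𝒳 with 𝒳* nonempty and fix γ ∈ (0,1). Let x ∈ 𝒯_γ, let ζ ≠ 0 be a weak subgradient of g at x, and set x⁺ = proj_𝒳( x − ((g(x) − g*)/‖ζ‖²)·ζ ). Then dist²(x⁺, 𝒳*) ≤ (1 − (1 − γ)·μ²/‖ζ‖²)·dist²(x, 𝒳*). -/
/-!
Write `h = g x - g*` and `t = h / ‖ζ‖²` for the Polyak step length. For every minimizer `z`,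
projecting onto `X` does not increase the distance to `z`, and the weak subgradient inequality at
`x` tested against `z` gives `‖x - t ζ - z‖² ≤ (1 + ρ t) ‖x - z‖² - h² / ‖ζ‖²`. Passing to the
infimum over `z` bounds `dist²(x⁺, 𝒳*)` by `(1 + ρ t) D² - h² / ‖ζ‖²` with `D = dist(x, 𝒳*)`.
Sharpness `μ D ≤ h` and the tube condition `ρ D < γ μ` then give
`ρ h D² ≤ γ h²` and `(1 - γ) μ² D² ≤ (1 - γ) h²`, which is exactly the claimed contraction.
-/

open scoped InnerProductSpace

open Metric

section InnerProductSpace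

variable {F : Type*} [NormedAddCommGroup F] [InnerProductSpace ℝ F]

def IsWeakSubgradient (ρ : ℝ) (g : F → ℝ) (x ζ : F) : Prop :=
  ∀ y, g x + ⟪ζ, y - x⟫_ℝ - ρ / 2 * ‖y - x‖ ^ 2 ≤ g y

theorem Convex.dist_le_of_forall_dist_le {K : Set F} (hK : Convex ℝ K) {u p z : F} (hp : p ∈ K)
    (hmin : ∀ y ∈ K, dist u p ≤ dist u y) (hz : z ∈ K) : dist p z ≤ dist u z := by
  have : Nonempty K := ⟨⟨p, hp⟩⟩
  have hinf : ‖u - p‖ = ⨅ w : K, ‖u - w‖ :=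
    le_antisymm (le_ciInf fun w => by simpa only [dist_eq_norm] using hmin w w.2)
      (ciInf_le (f := fun w : K => ‖u - w‖) ⟨0, Set.forall_mem_range.2 fun _ => norm_nonneg _⟩
        ⟨p, hp⟩)
  have hobtuse : ⟪u - p, z - p⟫_ℝ ≤ 0 := (norm_eq_iInf_iff_real_inner_le_zero hK hp).mp hinf z hz
  have hexpand := norm_sub_sq_real (u - p) (z - p)
  rw [sub_sub_sub_cancel_right, norm_sub_rev z p] at hexpand
  rw [dist_eq_norm, dist_eq_norm, ← sq_le_sq₀ (norm_nonneg _) (norm_nonneg _)]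
  nlinarith [sq_nonneg ‖u - p‖]

theorem IsWeakSubgradient.norm_sub_smul_sub_sq_le {ρ : ℝ} {g : F → ℝ} {x ζ : F}
    (hζ : IsWeakSubgradient ρ g x ζ) (z : F) {t : ℝ} (ht : 0 ≤ t) :
    ‖x - t • ζ - z‖ ^ 2 ≤ (1 + ρ * t) * ‖x - z‖ ^ 2 - 2 * t * (g x - g z) + t ^ 2 * ‖ζ‖ ^ 2 := by
  have hinner : g x - g z - ρ / 2 * ‖x - z‖ ^ 2 ≤ ⟪x - z, ζ⟫_ℝ := by
    have := hζ z
    rw [← neg_sub x z, inner_neg_right, norm_neg, real_inner_comm] at this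
    linarith
  have hexpand : ‖x - t • ζ - z‖ ^ 2 = ‖x - z‖ ^ 2 - 2 * t * ⟪x - z, ζ⟫_ℝ + t ^ 2 * ‖ζ‖ ^ 2 := by
    rw [sub_right_comm, norm_sub_sq_real, real_inner_smul_right, norm_smul, mul_pow,
      Real.norm_eq_abs, sq_abs]
    ring
  rw [hexpand]
  nlinarith [mul_le_mul_of_nonneg_left hinner (by positivity : (0 : ℝ) ≤ 2 * t)]

end InnerProductSpace

theorem Metric.le_mul_infDist_sq {α : Type*} [PseudoMetricSpace α] {s : Set α} {x : α}
    (hs : s.Nonempty) {a c : ℝ} (hc : 0 < c) (h : ∀ z ∈ s, a ≤ c * dist x z ^ 2) :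
    a ≤ c * infDist x s ^ 2 := by
  have hsqrt : √(a / c) ≤ infDist x s := (le_infDist hs).2 fun z hz =>
    (Real.sqrt_le_left dist_nonneg).2 ((div_le_iff₀' hc).2 (h z hz))
  exact (div_le_iff₀' hc).1 ((Real.sqrt_le_left infDist_nonneg).1 hsqrt)

theorem polyak_step_bound_le_contraction {μ ρ γ S D h : ℝ} (hμ : 0 ≤ μ)
    (hγ : γ ∈ Set.Icc (0 : ℝ) 1) (hS : 0 < S) (hD : 0 ≤ D) (hsharp : μ * D ≤ h)
    (htube : ρ * D ≤ γ * μ) :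
    (1 + ρ * (h / S)) * D ^ 2 - (h / S) ^ 2 * S ≤ (1 - (1 - γ) * μ ^ 2 / S) * D ^ 2 := by
  have hh : 0 ≤ h := (mul_nonneg hμ hD).trans hsharp
  have hlin : ρ * h * D ^ 2 ≤ γ * h ^ 2 := calc
    ρ * h * D ^ 2 = h * D * (ρ * D) := by ring
    _ ≤ h * D * (γ * μ) := by gcongr
    _ = γ * h * (μ * D) := by ring
    _ ≤ γ * h * h := by gcongr; exact mul_nonneg hγ.1 hh
    _ = γ * h ^ 2 := by ring
  have hquad : (1 - γ) * (μ * D) ^ 2 ≤ (1 - γ) * h ^ 2 := by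
    gcongr; exact sub_nonneg.2 hγ.2
  rw [← mul_le_mul_iff_left₀ hS]
  field_simp
  nlinarith

theorem polyak_one_step_general
    {d : ℕ}
    (g : EuclideanSpace ℝ (Fin d) → ℝ) (μ ρ γ : ℝ)
    (hμ : 0 < μ) (hρ : 0 < ρ) (hγ : γ ∈ Set.Ioo (0 : ℝ) 1)
    (X Xstar : Set (EuclideanSpace ℝ (Fin d)))
    (hXcv : Convex ℝ X)
    (hXstar : Xstar = {x | x ∈ X ∧ ∀ y ∈ X, g x ≤ g y})
    (hXstarNe : Xstar.Nonempty)
    -- `gstar` is the minimal value of `g` over `X`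
    (gstar : ℝ) (hgstar : ∀ z ∈ Xstar, g z = gstar)
    -- sharpness
    (hsharp : ∀ x ∈ X, μ * Metric.infDist x Xstar ≤ g x - gstar)
    -- `x` lies in the tube `𝒯_γ`
    (x : EuclideanSpace ℝ (Fin d)) (hxX : x ∈ X)
    (hxtube : Metric.infDist x Xstar < γ * μ / ρ)
    -- `ζ ≠ 0` is a weak subgradient of `g` at `x`
    (ζ : EuclideanSpace ℝ (Fin d)) (hζ0 : ζ ≠ 0)
    (hζ : ∀ y, g x + ⟪ζ, y - x⟫_ℝ - ρ / 2 * ‖y - x‖ ^ 2 ≤ g y)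
    -- `xp` is the projection onto `X` of the Polyak subgradient step
    (xp : EuclideanSpace ℝ (Fin d)) (hxpX : xp ∈ X)
    (hxp : ∀ y ∈ X, dist (x - ((g x - gstar) / ‖ζ‖ ^ 2) • ζ) xp ≤
      dist (x - ((g x - gstar) / ‖ζ‖ ^ 2) • ζ) y) :
    Metric.infDist xp Xstar ^ 2 ≤
      (1 - (1 - γ) * μ ^ 2 / ‖ζ‖ ^ 2) * Metric.infDist x Xstar ^ 2 := by
  set t := (g x - gstar) / ‖ζ‖ ^ 2
  have hS : 0 < ‖ζ‖ ^ 2 := pow_pos (norm_pos_iff.2 hζ0) 2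
  have hD : 0 ≤ infDist x Xstar := infDist_nonneg
  have hgap : μ * infDist x Xstar ≤ g x - gstar := hsharp x hxX
  have ht : 0 ≤ t := div_nonneg ((mul_nonneg hμ.le hD).trans hgap) hS.le
  have htS : t * ‖ζ‖ ^ 2 = g x - gstar := div_mul_cancel₀ _ hS.ne'
  have hXstar_sub : Xstar ⊆ X := hXstar ▸ fun z hz => hz.1
  have hstep (z) (hz : z ∈ Xstar) :
      infDist xp Xstar ^ 2 + t ^ 2 * ‖ζ‖ ^ 2 ≤ (1 + ρ * t) * dist x z ^ 2 := by
    have hproj : infDist xp Xstar ^ 2 ≤ dist (x - t • ζ) z ^ 2 := by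
      gcongr
      exacts [infDist_nonneg, (infDist_le_dist_of_mem hz).trans
        (hXcv.dist_le_of_forall_dist_le hxpX hxp (hXstar_sub hz))]
    have hdescent := IsWeakSubgradient.norm_sub_smul_sub_sq_le hζ z ht
    rw [hgstar z hz, ← dist_eq_norm, ← dist_eq_norm, ← htS] at hdescent
    linarith
  have htube : ρ * infDist x Xstar ≤ γ * μ := ((lt_div_iff₀' hρ).1 hxtube).le
  linarith [le_mul_infDist_sq hXstarNe (by positivity) hstep,
    polyak_step_bound_le_contraction hμ.le (Set.Ioo_subset_Icc_self hγ) hS hD hgap htube]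

/-- **One step of the Polyak subgradient method.**
If `g` is `μ`-sharp on `X` with nonempty solution set `Xstar`, `γ ∈ (0,1)`, `x ∈ 𝒯_γ`,
`ζ ≠ 0` is a weak subgradient of `g` at `x`, and
`x⁺ = proj_X(x - ((g(x) - g*)/‖ζ‖²)·ζ)`, then
`dist²(x⁺, Xstar) ≤ (1 - (1-γ)·μ²/‖ζ‖²)·dist²(x, Xstar)`. -/
theorem polyak_one_step
    {d : ℕ} (hd : 1 ≤ d)
    (g : EuclideanSpace ℝ (Fin d) → ℝ) (μ ρ γ : ℝ)
    (hμ : 0 < μ) (hρ : 0 < ρ) (hγ : γ ∈ Set.Ioo (0 : ℝ) 1)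
    (X Xstar : Set (EuclideanSpace ℝ (Fin d)))
    (hXne : X.Nonempty) (hXcl : IsClosed X) (hXcv : Convex ℝ X)
    (hXstar : Xstar = {x | x ∈ X ∧ ∀ y ∈ X, g x ≤ g y})
    (hXstarNe : Xstar.Nonempty)
    -- `gstar` is the minimal value of `g` over `X`
    (gstar : ℝ) (hgstar : ∀ z ∈ Xstar, g z = gstar)
    -- sharpness
    (hsharp : ∀ x ∈ X, μ * Metric.infDist x Xstar ≤ g x - gstar)
    -- `x` lies in the tube `𝒯_γ`
    (x : EuclideanSpace ℝ (Fin d)) (hxX : x ∈ X)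
    (hxtube : Metric.infDist x Xstar < γ * μ / ρ)
    -- `ζ ≠ 0` is a weak subgradient of `g` at `x`
    (ζ : EuclideanSpace ℝ (Fin d)) (hζ0 : ζ ≠ 0)
    (hζ : ∀ y, g x + ⟪ζ, y - x⟫_ℝ - ρ / 2 * ‖y - x‖ ^ 2 ≤ g y)
    -- `xp` is the projection onto `X` of the Polyak subgradient step
    (xp : EuclideanSpace ℝ (Fin d)) (hxpX : xp ∈ X)
    (hxp : ∀ y ∈ X, dist (x - ((g x - gstar) / ‖ζ‖ ^ 2) • ζ) xp ≤
      dist (x - ((g x - gstar) / ‖ζ‖ ^ 2) • ζ) y) :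
    Metric.infDist xp Xstar ^ 2 ≤
      (1 - (1 - γ) * μ ^ 2 / ‖ζ‖ ^ 2) * Metric.infDist x Xstar ^ 2 :=
  polyak_one_step_general g μ ρ γ hμ hρ hγ X Xstar hXcv hXstar hXstarNe gstar hgstar hsharp x hxX
    hxtube ζ hζ0 hζ xp hxpX hxp
end

section
/- (Basic recurrence for the normalized subgradient step.) Suppose g is μ-sharp on 𝒳 with 𝒳* nonempty, and fix L with 0 < μ ≤ L and set τ = μ/L. Let x ∈ 𝒯₁, let ζ ≠ 0 be a weak subgradient of g at x with ‖ζ‖ ≤ L, let α > 0, and set x⁺ = proj_𝒳( x − α·ζ/‖ζ‖ ). Then, writing E(x) = dist²(x, 𝒳*), one has E(x⁺) ≤ (1 + ρα/L)·E(x) − 2ατ·√(E(x)) + α². -/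
open scoped InnerProductSpace

/-!
Fix `w ∈ X*`. Since `proj_X` moves no point closer to `w ∈ X` than it already is,
`‖x⁺ - w‖² ≤ ‖x - w‖² - 2(α/‖ζ‖)⟪ζ, x - w⟫ + α²`, and the weak subgradient inequality at `w`
combined with sharpness gives `⟪ζ, x - w⟫ ≥ μ·dist(x, X*) - (ρ/2)‖x - w‖²`. Letting `w` approach
a nearest point of `X*` yields `E(x⁺) ≤ E(x) + (α/‖ζ‖)(ρ E(x) - 2μ√E(x)) + α²`; in the tube the
bracket is nonpositive, so the step size `α/‖ζ‖` may be replaced by the smaller `α/L`.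
-/

section InnerProductSpace

variable {E : Type*} [NormedAddCommGroup E] [InnerProductSpace ℝ E]

theorem Convex.norm_sub_le_of_forall_dist_le {K : Set E} (hK : Convex ℝ K) {u v w : E}
    (hv : v ∈ K) (hmin : ∀ y ∈ K, dist u v ≤ dist u y) (hw : w ∈ K) :
    ‖v - w‖ ≤ ‖u - w‖ := by
  have : Nonempty K := ⟨⟨v, hv⟩⟩
  have hinf : ‖u - v‖ = ⨅ y : K, ‖u - y‖ :=
    le_antisymm (le_ciInf fun y => by simpa only [dist_eq_norm] using hmin y y.2)
      (ciInf_le (f := fun y : K => ‖u - y‖)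
        ⟨0, Set.forall_mem_range.2 fun _ => norm_nonneg _⟩ ⟨v, hv⟩)
  have hvar : ⟪u - v, w - v⟫_ℝ ≤ 0 :=
    (norm_eq_iInf_iff_real_inner_le_zero hK hv).mp hinf w hw
  have hexpand : ‖u - w‖ ^ 2 = ‖u - v‖ ^ 2 - 2 * ⟪u - v, w - v⟫_ℝ + ‖v - w‖ ^ 2 := by
    rw [← sub_sub_sub_cancel_right u w v, norm_sub_sq_real, ← norm_neg (w - v), neg_sub]
  refine (pow_le_pow_iff_left₀ (norm_nonneg _) (norm_nonneg _) two_ne_zero).mp ?_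
  nlinarith [sq_nonneg ‖u - v‖]

theorem norm_sub_smul_sub_sq (x w ζ : E) (t : ℝ) :
    ‖x - t • ζ - w‖ ^ 2 = ‖x - w‖ ^ 2 - 2 * t * ⟪ζ, x - w⟫_ℝ + t ^ 2 * ‖ζ‖ ^ 2 := by
  rw [sub_right_comm, norm_sub_sq_real, real_inner_smul_right, real_inner_comm, norm_smul,
    mul_pow, Real.norm_eq_abs, sq_abs]
  ring

theorem Convex.norm_sub_sq_le_of_forall_dist_step_le {K : Set E} (hK : Convex ℝ K)
    {x ζ v w : E} {t : ℝ} (hv : v ∈ K)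
    (hmin : ∀ y ∈ K, dist (x - t • ζ) v ≤ dist (x - t • ζ) y) (hw : w ∈ K) :
    ‖v - w‖ ^ 2 ≤ ‖x - w‖ ^ 2 - 2 * t * ⟪ζ, x - w⟫_ℝ + t ^ 2 * ‖ζ‖ ^ 2 := by
  rw [← norm_sub_smul_sub_sq]
  exact pow_le_pow_left₀ (norm_nonneg _) (hK.norm_sub_le_of_forall_dist_le hv hmin hw) 2

theorem le_inner_of_weak_subgradient {g : E → ℝ} {x ζ w : E} {ρ m : ℝ}
    (hζ : ∀ y, g x + ⟪ζ, y - x⟫_ℝ - ρ / 2 * ‖y - x‖ ^ 2 ≤ g y) (hw : g w + m ≤ g x) :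
    m - ρ / 2 * ‖x - w‖ ^ 2 ≤ ⟪ζ, x - w⟫_ℝ := by
  have := hζ w
  rw [← neg_sub x w, inner_neg_right, norm_neg] at this
  linarith

end InnerProductSpace

theorem Metric.le_apply_infDist_of_forall_mem {α : Type*} [MetricSpace α] [ProperSpace α]
    {S : Set α} (hS : S.Nonempty) (x : α) {F : ℝ → ℝ} (hF : Continuous F) {a : ℝ}
    (h : ∀ w ∈ S, a ≤ F (dist x w)) : a ≤ F (infDist x S) := by
  obtain ⟨y, hy, hxy⟩ := exists_mem_closure_infDist_eq_dist hS x
  have hclosed : IsClosed {w | a ≤ F (dist x w)} :=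
    isClosed_le continuous_const (hF.comp (continuous_const.dist continuous_id))
  rw [hxy]
  exact closure_minimal h hclosed hy

theorem basic_recurrence_general
    {d : ℕ}
    (g : EuclideanSpace ℝ (Fin d) → ℝ) (μ ρ L α : ℝ)
    (hρ : 0 < ρ) (hα : 0 < α)
    (X Xstar : Set (EuclideanSpace ℝ (Fin d)))
    (hXcv : Convex ℝ X)
    (hXstar : Xstar = {x | x ∈ X ∧ ∀ y ∈ X, g x ≤ g y})
    (hXstarNe : Xstar.Nonempty)
    -- `gstar` is the minimal value of `g` over `X`
    (gstar : ℝ) (hgstar : ∀ z ∈ Xstar, g z = gstar)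
    -- sharpness
    (hsharp : ∀ x ∈ X, μ * Metric.infDist x Xstar ≤ g x - gstar)
    -- `x` lies in the tube `𝒯₁`
    (x : EuclideanSpace ℝ (Fin d)) (hxX : x ∈ X)
    (hxtube : Metric.infDist x Xstar < μ / ρ)
    -- `ζ ≠ 0` is a weak subgradient of `g` at `x` with `‖ζ‖ ≤ L`
    (ζ : EuclideanSpace ℝ (Fin d)) (hζ0 : ζ ≠ 0) (hζL : ‖ζ‖ ≤ L)
    (hζ : ∀ y, g x + ⟪ζ, y - x⟫_ℝ - ρ / 2 * ‖y - x‖ ^ 2 ≤ g y)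
    -- `xp` is the projection onto `X` of the normalized subgradient step
    (xp : EuclideanSpace ℝ (Fin d)) (hxpX : xp ∈ X)
    (hxp : ∀ y ∈ X, dist (x - (α / ‖ζ‖) • ζ) xp ≤ dist (x - (α / ‖ζ‖) • ζ) y) :
    Metric.infDist xp Xstar ^ 2 ≤
      (1 + ρ * α / L) * Metric.infDist x Xstar ^ 2
        - 2 * α * (μ / L) * Real.sqrt (Metric.infDist x Xstar ^ 2) + α ^ 2 := by
  set D := Metric.infDist x Xstar
  set p := α / ‖ζ‖
  have hζpos : 0 < ‖ζ‖ := norm_pos_iff.mpr hζ0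
  have hp : p ^ 2 * ‖ζ‖ ^ 2 = α ^ 2 := by rw [div_pow, div_mul_cancel₀ _ (by positivity)]
  have hstep : ∀ w ∈ Xstar,
      Metric.infDist xp Xstar ^ 2 ≤ (1 + ρ * p) * dist x w ^ 2 - 2 * p * μ * D + α ^ 2 := by
    intro w hw
    have hwX : w ∈ X := by rw [hXstar] at hw; exact hw.1
    have hinner : μ * D - ρ / 2 * ‖x - w‖ ^ 2 ≤ ⟪ζ, x - w⟫_ℝ :=
      le_inner_of_weak_subgradient hζ (by linarith [hsharp x hxX, hgstar w hw])
    have hproj := hXcv.norm_sub_sq_le_of_forall_dist_step_le hxpX hxp hwX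
    have hnear := pow_le_pow_left₀ Metric.infDist_nonneg
      (Metric.infDist_le_dist_of_mem (x := xp) hw) 2
    rw [dist_eq_norm] at hnear ⊢
    nlinarith [mul_le_mul_of_nonneg_left hinner (by positivity : (0 : ℝ) ≤ 2 * p)]
  have hinf : Metric.infDist xp Xstar ^ 2 ≤ (1 + ρ * p) * D ^ 2 - 2 * p * μ * D + α ^ 2 :=
    Metric.le_apply_infDist_of_forall_mem hXstarNe x
      (F := fun r => (1 + ρ * p) * r ^ 2 - 2 * p * μ * D + α ^ 2) (by fun_prop) hstep
  have hD : 0 ≤ D := Metric.infDist_nonneg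
  have htube : ρ * D ^ 2 - 2 * μ * D ≤ 0 := by
    have := (lt_div_iff₀ hρ).mp hxtube
    nlinarith
  have hpL : α / L ≤ p := div_le_div_of_nonneg_left hα.le hζpos hζL
  rw [Real.sqrt_sq hD]
  calc Metric.infDist xp Xstar ^ 2 ≤ D ^ 2 + p * (ρ * D ^ 2 - 2 * μ * D) + α ^ 2 := by linarith
    _ ≤ D ^ 2 + α / L * (ρ * D ^ 2 - 2 * μ * D) + α ^ 2 := by
      linarith [mul_le_mul_of_nonpos_right hpL htube]
    _ = _ := by ring

/-- **Basic recurrence for the normalized subgradient step.**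
If `g` is `μ`-sharp on `X` with nonempty solution set `Xstar`, `0 < μ ≤ L`, `τ = μ/L`,
`x ∈ 𝒯₁`, `ζ ≠ 0` is a weak subgradient of `g` at `x` with `‖ζ‖ ≤ L`, `α > 0`, and
`x⁺ = proj_X(x - α·ζ/‖ζ‖)`, then, writing `E(x) = dist²(x, Xstar)`,
`E(x⁺) ≤ (1 + ρα/L)·E(x) - 2ατ·√(E(x)) + α²`. -/
theorem basic_recurrence
    {d : ℕ} (hd : 1 ≤ d)
    (g : EuclideanSpace ℝ (Fin d) → ℝ) (μ ρ L α : ℝ)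
    (hμ : 0 < μ) (hρ : 0 < ρ) (hμL : μ ≤ L) (hα : 0 < α)
    (X Xstar : Set (EuclideanSpace ℝ (Fin d)))
    (hXne : X.Nonempty) (hXcl : IsClosed X) (hXcv : Convex ℝ X)
    (hXstar : Xstar = {x | x ∈ X ∧ ∀ y ∈ X, g x ≤ g y})
    (hXstarNe : Xstar.Nonempty)
    -- `gstar` is the minimal value of `g` over `X`
    (gstar : ℝ) (hgstar : ∀ z ∈ Xstar, g z = gstar)
    -- sharpness
    (hsharp : ∀ x ∈ X, μ * Metric.infDist x Xstar ≤ g x - gstar)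
    -- `x` lies in the tube `𝒯₁`
    (x : EuclideanSpace ℝ (Fin d)) (hxX : x ∈ X)
    (hxtube : Metric.infDist x Xstar < μ / ρ)
    -- `ζ ≠ 0` is a weak subgradient of `g` at `x` with `‖ζ‖ ≤ L`
    (ζ : EuclideanSpace ℝ (Fin d)) (hζ0 : ζ ≠ 0) (hζL : ‖ζ‖ ≤ L)
    (hζ : ∀ y, g x + ⟪ζ, y - x⟫_ℝ - ρ / 2 * ‖y - x‖ ^ 2 ≤ g y)
    -- `xp` is the projection onto `X` of the normalized subgradient step
    (xp : EuclideanSpace ℝ (Fin d)) (hxpX : xp ∈ X)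
    (hxp : ∀ y ∈ X, dist (x - (α / ‖ζ‖) • ζ) xp ≤ dist (x - (α / ‖ζ‖) • ζ) y) :
    Metric.infDist xp Xstar ^ 2 ≤
      (1 + ρ * α / L) * Metric.infDist x Xstar ^ 2
        - 2 * α * (μ / L) * Real.sqrt (Metric.infDist x Xstar ^ 2) + α ^ 2 :=
  basic_recurrence_general g μ ρ L α hρ hα X Xstar hXcv hXstar hXstarNe gstar hgstar hsharp x hxX
    hxtube ζ hζ0 hζL hζ xp hxpX hxp
end
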